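/- arXiv:math/0606093 — 2 statements merged into one kernel-verified Lean document; each statement's English description precedes it below -/
import Mathlib

section
/- Let u be a basic commutator of weight > 1 on x_1,…,x_r, written u = [c_1, c_2, …, c_n] (left-normed) with each c_i basic, wt(c_1) = 1, and c_2 ≤ c_3 ≤ ⋯ ≤ c_n. Let v be a basic commutator with v < u. Then [u ← v] equals [c_1, v, c_2, …, c_n] if c_2 > v, and [c_1, …, c_j, v, c_{j+1}, …, c_n] where j is the largest index with c_j ≤ v, otherwise. -/
/-!
Peel the last entry off `u = [c₁, c₂, …, cₙ]`. If `v < cₙ`, the shove recurses into the prefix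
`[c₁, …, cₙ₋₁]`, which is still greater than `v` because `u` is basic and so `cₙ` is less than
that prefix. Otherwise `cₙ ≤ v`, hence every `cⱼ ≤ v` by sortedness, and `v` is appended at the
end. The recursion bottoms out at the letter `c₁`, where `[c₁ ← v] = [c₁, v]`.
-/

/-- Formal commutators on the letters `x_0 < x_1 < ⋯ < x_{r-1}`. -/
inductive BC (r : ℕ) : Type
  | leaf : Fin r → BC r
  | comm : BC r → BC r → BC r

namespace BC

variable {r : ℕ}

/-- The weight of a formal commutator in the letters. -/
def wt : BC r → ℕ
  | leaf _ => 1
  | comm a b => wt a + wt b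

/-- Size (used for termination). -/
def size : BC r → ℕ
  | leaf _ => 1
  | comm a b => size a + size b + 1

/-- An injective encoding of formal commutators into `ℕ`, used to fix a
definite total order among basic commutators of the same weight. -/
def enc : BC r → ℕ
  | leaf i => Nat.pair 0 i
  | comm a b => Nat.pair 1 (Nat.pair (enc a) (enc b))

/-- The order on formal commutators: first by weight, then by the fixed
encoding within each weight. -/
def lt (a b : BC r) : Prop :=
  wt a < wt b ∨ (wt a = wt b ∧ enc a < enc b)

instance : DecidableRel (lt (r := r)) := fun a b => by
  unfold lt; infer_instance

theorem lt_asymm' {a b : BC r} (h : lt a b) : ¬ lt b a := by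
  rcases h with h | ⟨he, h⟩ <;> rintro (h' | ⟨he', h'⟩) <;> omega

/-- Basic commutators: the letters are basic of weight 1, and `[c₁,c₂]` is
basic when `c₁, c₂` are basic, `c₁ > c₂`, and whenever `c₁ = [a,b]` we have
`b ≤ c₂`. -/
inductive IsBasic : BC r → Prop
  | leaf (i : Fin r) : IsBasic (leaf i)
  | comm {c₁ c₂ : BC r} : IsBasic c₁ → IsBasic c₂ → lt c₂ c₁ →
      (∀ a b, c₁ = BC.comm a b → ¬ lt c₂ b) → IsBasic (BC.comm c₁ c₂)

/-- The shove operation `[u ← v]`: `[u ← v] = [v ← u]` if `v > u`;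
`[u ← v] = [[c₁ ← v], c₂]` if `v < u`, `u = [c₁,c₂]` and `c₂ > v`;
`[u ← v] = [u,v]` otherwise. -/
def shove : BC r → BC r → BC r
  | u, v =>
    if h : lt u v then shove v u
    else
      match u with
      | leaf i => comm (leaf i) v
      | comm c₁ c₂ => if lt v c₂ then comm (shove c₁ v) c₂ else comm (comm c₁ c₂) v
  termination_by u v => (size u + size v, if lt u v then 1 else 0)
  decreasing_by
  · exact Prod.Lex.right' _ (by omega) (by simp [h, lt_asymm' h])
  · exact Prod.Lex.left _ _ (by simp [size] <;> omega)


/-- Left-normed commutator: `leftNormed c [d₁,…,dₙ] = [c,d₁,…,dₙ]`. -/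
def leftNormed {r : ℕ} (c : BC r) : List (BC r) → BC r
  | [] => c
  | d :: l => leftNormed (comm c d) l

/-- Insert `v` into a list right after the last entry `≤ v` (i.e. before the
first entry `> v`). -/
def insertAfterLE {r : ℕ} (v : BC r) : List (BC r) → List (BC r)
  | [] => [v]
  | d :: l => if lt v d then v :: d :: l else d :: insertAfterLE v l

theorem lt.trans {a b c : BC r} (hab : lt a b) (hbc : lt b c) : lt a c := by
  unfold lt at *; omega

theorem not_lt_trans {a b c : BC r} (hab : ¬ lt b a) (hbc : ¬ lt c b) : ¬ lt c a := by
  unfold lt at *; omega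

instance : IsTrans (BC r) (fun a b => ¬ lt b a) := ⟨fun _ _ _ => not_lt_trans⟩

theorem one_le_wt : ∀ a : BC r, 1 ≤ wt a
  | leaf _ => le_rfl
  | comm a _ => (one_le_wt a).trans (Nat.le_add_right _ _)

theorem exists_eq_leaf_of_wt_eq_one {a : BC r} (h : wt a = 1) : ∃ i, a = leaf i := by
  cases a with
  | leaf i => exact ⟨i, rfl⟩
  | comm b c => have := one_le_wt b; have := one_le_wt c; simp only [wt] at h; omega

theorem IsBasic.left {c d : BC r} (h : IsBasic (BC.comm c d)) : IsBasic c := by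
  cases h with
  | comm hc _ _ _ => exact hc

theorem IsBasic.right_lt_left {c d : BC r} (h : IsBasic (BC.comm c d)) : lt d c := by
  cases h with
  | comm _ _ hdc _ => exact hdc

theorem shove_leaf_of_lt {i : Fin r} {v : BC r} (hv : lt v (leaf i)) :
    shove (leaf i) v = comm (leaf i) v := by
  rw [shove, dif_neg (lt_asymm' hv)]

theorem shove_comm_of_lt_right {c d v : BC r} (hv : lt v (comm c d)) (hvd : lt v d) :
    shove (comm c d) v = comm (shove c v) d := by
  rw [shove, dif_neg (lt_asymm' hv)]
  exact if_pos hvd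

theorem shove_comm_of_not_lt_right {c d v : BC r} (hv : lt v (comm c d)) (hvd : ¬ lt v d) :
    shove (comm c d) v = comm (comm c d) v := by
  rw [shove, dif_neg (lt_asymm' hv)]
  exact if_neg hvd

theorem leftNormed_append_singleton (c : BC r) (l : List (BC r)) (d : BC r) :
    leftNormed c (l ++ [d]) = comm (leftNormed c l) d := by
  induction l generalizing c with
  | nil => rfl
  | cons e l ih => exact ih (comm c e)

theorem insertAfterLE_append_singleton_of_lt {v d : BC r} (l : List (BC r)) (hvd : lt v d) :
    insertAfterLE v (l ++ [d]) = insertAfterLE v l ++ [d] := by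
  induction l with
  | nil => simp [insertAfterLE, hvd]
  | cons e l ih => by_cases hve : lt v e <;> simp [insertAfterLE, hve, ih]

theorem insertAfterLE_eq_append_of_forall_not_lt {v : BC r} {l : List (BC r)}
    (h : ∀ x ∈ l, ¬ lt v x) : insertAfterLE v l = l ++ [v] := by
  induction l with
  | nil => rfl
  | cons e l ih =>
    simp only [List.mem_cons, forall_eq_or_imp] at h
    simp [insertAfterLE, h.1, ih h.2]

theorem shove_leftNormed_leaf (i : Fin r) (v : BC r) (l : List (BC r))
    (hu : IsBasic (leftNormed (leaf i) l)) (hv : lt v (leftNormed (leaf i) l))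
    (hl : l.Pairwise (fun a b => ¬ lt b a)) :
    shove (leftNormed (leaf i) l) v = leftNormed (leaf i) (insertAfterLE v l) := by
  induction l using List.reverseRecOn with
  | nil => exact shove_leaf_of_lt hv
  | append_singleton l d ih =>
    rw [leftNormed_append_singleton] at hu hv ⊢
    obtain ⟨hl, -, hld⟩ := List.pairwise_append.mp hl
    by_cases hvd : lt v d
    · have hv' : lt v (leftNormed (leaf i) l) := hvd.trans hu.right_lt_left
      rw [shove_comm_of_lt_right hv hvd, ih hu.left hv' hl,
        insertAfterLE_append_singleton_of_lt l hvd, leftNormed_append_singleton]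
    · have hall : ∀ x ∈ l ++ [d], ¬ lt v x := by
        intro x hx
        rcases List.mem_append.mp hx with hx | hx
        · exact not_lt_trans (hld x hx d (List.mem_singleton_self d)) hvd
        · rwa [List.mem_singleton.mp hx]
      rw [shove_comm_of_not_lt_right hv hvd, insertAfterLE_eq_append_of_forall_not_lt hall,
        leftNormed_append_singleton, leftNormed_append_singleton]

theorem shove_description_general {r : ℕ} (u v c₁ c₂ : BC r) (cs : List (BC r))
    (hu : IsBasic u) (hvu : lt v u)
    (huform : u = leftNormed c₁ (c₂ :: cs)) (hc₁ : wt c₁ = 1)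
    (hsorted : List.Chain' (fun a b => ¬ lt b a) (c₂ :: cs)) :
    shove u v = leftNormed c₁ (insertAfterLE v (c₂ :: cs)) := by
  subst huform
  obtain ⟨i, rfl⟩ := exists_eq_leaf_of_wt_eq_one hc₁
  exact shove_leftNormed_leaf i v _ hu hvu (List.isChain_iff_pairwise.mp hsorted)

/-- Explicit description of the shove operation: if `u = [c₁,c₂,…,cₙ]` is a
basic commutator of weight `> 1` written left-normed with `wt c₁ = 1` and
`c₂ ≤ ⋯ ≤ cₙ`, and `v < u` is basic, then `[u ← v]` is obtained by inserting
`v` into the sequence `c₂,…,cₙ` after the last `cⱼ ≤ v` (in particular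
`[u ← v] = [c₁,v,c₂,…,cₙ]` when `c₂ > v`). -/
theorem shove_description {r : ℕ} (u v c₁ c₂ : BC r) (cs : List (BC r))
    (hu : IsBasic u) (hwt : 1 < wt u) (hv : IsBasic v) (hvu : lt v u)
    (huform : u = leftNormed c₁ (c₂ :: cs)) (hc₁ : wt c₁ = 1)
    (hbasic : IsBasic c₁ ∧ IsBasic c₂ ∧ ∀ d ∈ cs, IsBasic d)
    (hsorted : List.Chain' (fun a b => ¬ lt b a) (c₂ :: cs)) :
    shove u v = leftNormed c₁ (insertAfterLE v (c₂ :: cs)) :=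
  shove_description_general u v c₁ c₂ cs hu hvu huform hc₁ hsorted

end BC
end

section
/- Let u be a basic commutator of weight > 1 and v a basic commutator with v < u. Then the right entry of [u ← v] equals the maximum of v and the right entry of u. -/
namespace BC

variable {r : ℕ}

/-- Right entry of a commutator `[a,b]` is `b`; letters have none. -/
def rightEntry {r : ℕ} : BC r → Option (BC r)
  | leaf _ => none
  | comm _ b => some b

theorem enc_injective : Function.Injective (enc (r := r))
  | leaf i, leaf j, h => by
    simp only [enc, Nat.pair_eq_pair] at h
    exact congrArg leaf (Fin.ext h.2)
  | leaf _, comm _ _, h => by simp [enc, Nat.pair_eq_pair] at h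
  | comm _ _, leaf _, h => by simp [enc, Nat.pair_eq_pair] at h
  | comm a b, comm c d, h => by
    simp only [enc, Nat.pair_eq_pair] at h
    rw [enc_injective h.2.1, enc_injective h.2.2]

theorem eq_of_not_lt_of_not_lt {a b : BC r} (hab : ¬ lt a b) (hba : ¬ lt b a) : a = b :=
  enc_injective (by unfold lt at hab hba; omega)

theorem shove_comm_of_lt {a b v : BC r} (hv : lt v (comm a b)) :
    shove (comm a b) v = if lt v b then comm (shove a v) b else comm (comm a b) v := by
  rw [shove, dif_neg (lt_asymm' hv)]

theorem rightEntry_shove_general {r : ℕ} (u v : BC r) (hvu : lt v u) :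
    ∀ a b : BC r, u = comm a b →
      rightEntry (shove u v) = some (if lt b v then v else b) := by
  rintro a b rfl
  rw [shove_comm_of_lt hvu]
  by_cases hvb : lt v b
  · rw [if_pos hvb, if_neg (lt_asymm' hvb), rightEntry]
  · by_cases hbv : lt b v
    · rw [if_neg hvb, if_pos hbv, rightEntry]
    · rw [if_neg hvb, if_neg hbv, rightEntry, eq_of_not_lt_of_not_lt hvb hbv]

/-- If `u` is a basic commutator of weight `> 1` and `v < u` is basic, then
the right entry of `[u ← v]` is the larger of `v` and the right entry
of `u`. -/
theorem rightEntry_shove {r : ℕ} (u v : BC r) (hu : IsBasic u)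
    (hwt : 1 < wt u) (hv : IsBasic v) (hvu : lt v u) :
    ∀ a b : BC r, u = comm a b →
      rightEntry (shove u v) = some (if lt b v then v else b) :=
  rightEntry_shove_general u v hvu

end BC
end
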